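/- arXiv:1811.06201 — 4 statements merged into one kernel-verified Lean document; each statement's English description precedes it below -/
import Mathlib

section
/- Let q be an odd prime power and γ₁, γ₂ ∈ GF(q²)\{0} with γ₁γ̄₂ − γ̄₁γ₂ ≠ 0. There exists c ∈ GF(q²)\{0} and r ∈ GF(q)\{0} satisfying both (cγ̄₁ + c̄γ₁)² = 4γ₁γ̄₁r and (cγ̄₂ + c̄γ₂)² = 4γ₂γ̄₂r if and only if γ₁γ₂ is a square in GF(q²). Moreover, when γ₁γ₂ is a square, the set of such c is exactly {c : c² γ̄₁γ̄₂ ∈ GF(q)\{0}}, and there are exactly 2(q−1) pairs (c,r). -/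
/-!
Write `z̄ = σ z` for an involutive ring endomorphism `σ` (the Frobenius `z ↦ z ^ q` of GF(q²)),
`N γ = c γ̄ + c̄ γ` and `t = c² γ̄₁ γ̄₂`. The identity
`γ₂ γ̄₂ (N γ₁)² - γ₁ γ̄₁ (N γ₂)² = (γ̄₁ γ₂ - γ₁ γ̄₂) (t - t̄)` shows that, as `γ₁ γ̄₂ ≠ γ̄₁ γ₂`,
a common radius exists exactly when `t̄ = t`, and it is then forced to be `(N γ₁)² / (4 γ₁ γ̄₁)`.
Every element of GF(q)ˣ is a square in GF(q²), so `t ∈ GF(q)ˣ` makes `γ̄₁ γ̄₂`, hence `γ₁ γ₂`,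
a square; conversely, if `γ₁ γ₂ = d²` then `t = (d̄ c)²`, so the admissible centres are `d̄⁻¹`
times the `2(q - 1)`-th roots of unity, of which there are `2(q - 1)` since `2(q - 1) ∣ q² - 1`.
-/

theorem tangency_identity {R : Type*} [CommRing R] (c c' γ₁ γ₁' γ₂ γ₂' : R) :
    γ₂ * γ₂' * (c * γ₁' + c' * γ₁) ^ 2 - γ₁ * γ₁' * (c * γ₂' + c' * γ₂) ^ 2 =
      (γ₁' * γ₂ - γ₁ * γ₂') * (c ^ 2 * (γ₁' * γ₂') - c' ^ 2 * (γ₁ * γ₂)) := by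
  ring

section Conjugation

variable {K : Type*} [Field K] (σ : K →+* K)

def IsTangent (γ c r : K) : Prop :=
  (c * σ γ + σ c * γ) ^ 2 = 4 * (γ * σ γ) * r

def tangentRadius (γ c : K) : K :=
  (c * σ γ + σ c * γ) ^ 2 / (4 * (γ * σ γ))

def IsAdmissibleCenter (γ₁ γ₂ c : K) : Prop :=
  σ (c ^ 2 * (σ γ₁ * σ γ₂)) = c ^ 2 * (σ γ₁ * σ γ₂) ∧ c ^ 2 * (σ γ₁ * σ γ₂) ≠ 0

def IsCommonTangent (γ₁ γ₂ c r : K) : Prop :=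
  σ r = r ∧ r ≠ 0 ∧ IsTangent σ γ₁ c r ∧ IsTangent σ γ₂ c r

variable {σ} {γ γ₁ γ₂ c r : K}

theorem four_mul_mul_map_ne_zero (h2 : (2 : K) ≠ 0) (hγ : γ ≠ 0) : 4 * (γ * σ γ) ≠ 0 := by
  have : (4 : K) = 2 * 2 := by norm_num
  simp [this, h2, hγ]

theorem isTangent_iff_eq_tangentRadius (h2 : (2 : K) ≠ 0) (hγ : γ ≠ 0) :
    IsTangent σ γ c r ↔ r = tangentRadius σ γ c := by
  rw [IsTangent, tangentRadius, eq_div_iff (four_mul_mul_map_ne_zero h2 hγ), mul_comm r, eq_comm]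

theorem map_tangentRadius (hσ : Function.Involutive σ) (γ c : K) :
    σ (tangentRadius σ γ c) = tangentRadius σ γ c := by
  simp only [tangentRadius, map_div₀, map_pow, map_add, map_mul, map_ofNat, hσ _]
  ring

theorem map_sq_mul_map_mul_map (hσ : Function.Involutive σ) (c γ₁ γ₂ : K) :
    σ (c ^ 2 * (σ γ₁ * σ γ₂)) = σ c ^ 2 * (γ₁ * γ₂) := by
  simp only [map_pow, map_mul, hσ _]

theorem ne_zero_of_mul_map_sub_ne_zero (hd : γ₁ * σ γ₂ - σ γ₁ * γ₂ ≠ 0) :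
    γ₁ ≠ 0 ∧ γ₂ ≠ 0 := by
  constructor <;> rintro rfl <;> simp at hd

theorem tangency_identity_iff (hd : γ₁ * σ γ₂ - σ γ₁ * γ₂ ≠ 0) :
    γ₂ * σ γ₂ * (c * σ γ₁ + σ c * γ₁) ^ 2 = γ₁ * σ γ₁ * (c * σ γ₂ + σ c * γ₂) ^ 2 ↔
      σ c ^ 2 * (γ₁ * γ₂) = c ^ 2 * (σ γ₁ * σ γ₂) := by
  have hd' : σ γ₁ * γ₂ - γ₁ * σ γ₂ ≠ 0 := fun h => hd (by linear_combination -h)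
  rw [← sub_eq_zero, tangency_identity, mul_eq_zero, or_iff_right hd', sub_eq_zero, eq_comm]

theorem fixed_of_isTangent (hd : γ₁ * σ γ₂ - σ γ₁ * γ₂ ≠ 0)
    (h₁ : IsTangent σ γ₁ c r) (h₂ : IsTangent σ γ₂ c r) :
    σ c ^ 2 * (γ₁ * γ₂) = c ^ 2 * (σ γ₁ * σ γ₂) := by
  rw [← tangency_identity_iff hd, h₁, h₂]
  ring

theorem mul_map_add_map_mul_ne_zero (hd : γ₁ * σ γ₂ - σ γ₁ * γ₂ ≠ 0) (hc : c ≠ 0)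
    (hfix : σ c ^ 2 * (γ₁ * γ₂) = c ^ 2 * (σ γ₁ * σ γ₂)) : c * σ γ₁ + σ c * γ₁ ≠ 0 := by
  intro h0
  have hγ₁ : σ γ₁ ≠ 0 := (map_ne_zero σ).mpr (ne_zero_of_mul_map_sub_ne_zero hd).1
  have : c ^ 2 * σ γ₁ * (γ₁ * σ γ₂ - σ γ₁ * γ₂) = 0 := by
    linear_combination γ₂ * (σ c * γ₁ - c * σ γ₁) * h0 - γ₁ * hfix
  simp [hc, hγ₁, hd] at this

theorem isCommonTangent_iff (hσ : Function.Involutive σ) (h2 : (2 : K) ≠ 0)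
    (hd : γ₁ * σ γ₂ - σ γ₁ * γ₂ ≠ 0) :
    IsCommonTangent σ γ₁ γ₂ c r ↔ IsAdmissibleCenter σ γ₁ γ₂ c ∧ r = tangentRadius σ γ₁ c := by
  obtain ⟨hγ₁, hγ₂⟩ := ne_zero_of_mul_map_sub_ne_zero hd
  have ht0 : c ^ 2 * (σ γ₁ * σ γ₂) ≠ 0 ↔ c ≠ 0 := by simp [hγ₁, hγ₂]
  rw [IsAdmissibleCenter, map_sq_mul_map_mul_map hσ, ht0, IsCommonTangent,
    isTangent_iff_eq_tangentRadius h2 hγ₁]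
  constructor
  · rintro ⟨-, hr0, hr, h₂⟩
    refine ⟨⟨fixed_of_isTangent hd ((isTangent_iff_eq_tangentRadius h2 hγ₁).mpr hr) h₂, ?_⟩, hr⟩
    rintro rfl
    simp [hr, tangentRadius] at hr0
  · rintro ⟨⟨hfix, hc⟩, rfl⟩
    have h4 := four_mul_mul_map_ne_zero (σ := σ) h2 hγ₁
    refine ⟨map_tangentRadius hσ γ₁ c,
      div_ne_zero (pow_ne_zero _ (mul_map_add_map_mul_ne_zero hd hc hfix)) h4, rfl, ?_⟩
    rw [IsTangent, tangentRadius, mul_div_assoc', eq_div_iff h4]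
    linear_combination -4 * (tangency_identity_iff hd).mpr hfix

theorem exists_isCommonTangent_iff (hσ : Function.Involutive σ) (h2 : (2 : K) ≠ 0)
    (hd : γ₁ * σ γ₂ - σ γ₁ * γ₂ ≠ 0) :
    (∃ r, IsCommonTangent σ γ₁ γ₂ c r) ↔ IsAdmissibleCenter σ γ₁ γ₂ c := by
  simp only [isCommonTangent_iff hσ h2 hd, exists_eq_right]

theorem sq_mul_map_mul_map_of_mul_eq {d : K} (hγd : γ₁ * γ₂ = d * d) (c : K) :
    c ^ 2 * (σ γ₁ * σ γ₂) = (σ d * c) ^ 2 := by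
  rw [← map_mul, hγd, map_mul]
  ring

theorem ne_zero_of_mul_eq_mul_self (hd : γ₁ * σ γ₂ - σ γ₁ * γ₂ ≠ 0) {d : K}
    (hγd : γ₁ * γ₂ = d * d) : d ≠ 0 := by
  obtain ⟨hγ₁, hγ₂⟩ := ne_zero_of_mul_map_sub_ne_zero hd
  rintro rfl
  simp [hγ₁, hγ₂] at hγd

theorem exists_ne_zero_isCommonTangent_iff (hσ : Function.Involutive σ) (h2 : (2 : K) ≠ 0)
    (hd : γ₁ * σ γ₂ - σ γ₁ * γ₂ ≠ 0) (hsq : ∀ a, a ≠ 0 → σ a = a → IsSquare a) :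
    (∃ c r, c ≠ 0 ∧ IsCommonTangent σ γ₁ γ₂ c r) ↔ IsSquare (γ₁ * γ₂) := by
  constructor
  · rintro ⟨c, r, hc, h⟩
    obtain ⟨hfix, ht0⟩ := (exists_isCommonTangent_iff hσ h2 hd).mp ⟨r, h⟩
    obtain ⟨s, hs⟩ := hsq _ ht0 hfix
    have hσγ : σ γ₁ * σ γ₂ = s / c * (s / c) := by
      field_simp
      linear_combination hs
    refine ⟨σ (s / c), ?_⟩
    rw [← map_mul, ← hσγ, map_mul, hσ, hσ]
  · rintro ⟨d, hγd⟩
    have hd0 : σ d ≠ 0 := (map_ne_zero σ).mpr (ne_zero_of_mul_eq_mul_self hd hγd)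
    obtain ⟨r, hr⟩ := (exists_isCommonTangent_iff hσ h2 hd (c := (σ d)⁻¹)).mpr <| by
      rw [IsAdmissibleCenter, sq_mul_map_mul_map_of_mul_eq hγd, mul_inv_cancel₀ hd0]
      simp
    exact ⟨_, r, inv_ne_zero hd0, hr⟩

theorem natCard_commonTangents (hσ : Function.Involutive σ) (h2 : (2 : K) ≠ 0)
    (hd : γ₁ * σ γ₂ - σ γ₁ * γ₂ ≠ 0) :
    Nat.card {x : K × K | x.1 ≠ 0 ∧ IsCommonTangent σ γ₁ γ₂ x.1 x.2} =
      Nat.card {c : K | IsAdmissibleCenter σ γ₁ γ₂ c} := by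
  have himage : {x : K × K | x.1 ≠ 0 ∧ IsCommonTangent σ γ₁ γ₂ x.1 x.2} =
      (fun c => (c, tangentRadius σ γ₁ c)) '' {c : K | IsAdmissibleCenter σ γ₁ γ₂ c} := by
    ext ⟨c, r⟩
    simp only [Set.mem_ofPred_eq, Set.mem_image, Prod.mk.injEq, isCommonTangent_iff hσ h2 hd]
    constructor
    · rintro ⟨-, ht, rfl⟩
      exact ⟨c, ht, rfl, rfl⟩
    · rintro ⟨c, ht, rfl, rfl⟩
      exact ⟨ne_zero_pow two_ne_zero (left_ne_zero_of_mul ht.2), ht, rfl⟩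
  rw [himage, Nat.card_image_of_injective fun a b h => congrArg Prod.fst h]

end Conjugation

theorem pow_eq_self_and_ne_zero_iff {M₀ : Type*} [GroupWithZero M₀] {q : ℕ} (hq : 2 ≤ q)
    {x : M₀} : x ^ q = x ∧ x ≠ 0 ↔ x ^ (q - 1) = 1 := by
  obtain ⟨n, rfl⟩ := Nat.exists_eq_add_of_le' hq
  rw [show n + 2 - 1 = n + 1 by omega, pow_succ _ (n + 1)]
  constructor
  · rintro ⟨h, hx⟩
    exact (mul_eq_right₀ hx).mp h
  · intro h
    have hx : x ≠ 0 := by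
      rintro rfl
      simp at h
    exact ⟨(mul_eq_right₀ hx).mpr h, hx⟩

theorem two_mul_sub_one_dvd_sq_sub_one {q : ℕ} (hq : Odd q) : 2 * (q - 1) ∣ q ^ 2 - 1 := by
  obtain ⟨k, rfl⟩ := hq
  refine ⟨k + 1, ?_⟩
  rw [Nat.add_sub_cancel]
  apply Nat.sub_eq_of_eq_add
  ring

section FiniteField

variable {K : Type*} [Field K] [Fintype K]

theorem exists_involutive_ringHom_eq_pow {p m : ℕ} (hp : p.Prime)
    (hK : Fintype.card K = (p ^ m) ^ 2) :
    ∃ σ : K →+* K, Function.Involutive σ ∧ ∀ x, σ x = x ^ p ^ m := by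
  have := Fact.mk hp
  have : CharP K p := charP_of_card_eq_prime_pow (f := m * 2) (by rw [hK, pow_mul])
  refine ⟨iterateFrobenius K p m, fun x => ?_, fun x => rfl⟩
  rw [iterateFrobenius_def, iterateFrobenius_def, ← pow_mul, ← sq, ← hK, FiniteField.pow_card]

theorem exists_isPrimitiveRoot_of_dvd_card_sub_one {n : ℕ} (hn : n ∣ Fintype.card K - 1) :
    ∃ ζ : K, IsPrimitiveRoot ζ n := by
  obtain ⟨g, hg⟩ := IsCyclic.exists_ofOrder_eq_natCard (α := Kˣ)
  rw [Nat.card_units, Nat.card_eq_fintype_card] at hg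
  have hg0 : orderOf g ≠ 0 := hg ▸ (Nat.sub_pos_of_lt Fintype.one_lt_card).ne'
  have hζ := IsPrimitiveRoot.orderOf (g ^ (orderOf g / n))
  rw [orderOf_pow_orderOf_div hg0 (hg ▸ hn)] at hζ
  exact ⟨_, IsPrimitiveRoot.coe_units_iff.mpr hζ⟩

theorem natCard_pow_eq_one_of_dvd_card_sub_one {n : ℕ} (hn : n ∣ Fintype.card K - 1) :
    Nat.card {x : K | x ^ n = 1} = n := by
  obtain ⟨ζ, hζ⟩ := exists_isPrimitiveRoot_of_dvd_card_sub_one hn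
  have hn0 : 0 < n := Nat.pos_of_dvd_of_pos hn (Nat.sub_pos_of_lt Fintype.one_lt_card)
  have : {x : K | x ^ n = 1} = ↑(Polynomial.nthRootsFinset n (1 : K)) := by
    ext x
    simp [Polynomial.mem_nthRootsFinset hn0]
  rw [this, Nat.card_coe_set_eq, Set.ncard_coe_finset, hζ.card_nthRootsFinset]

variable {q : ℕ}

theorem ringChar_ne_two_of_card_eq_sq (hK : Fintype.card K = q ^ 2) (hq : Odd q) :
    ringChar K ≠ 2 := by
  rw [Ne, FiniteField.even_card_iff_char_two, hK, Nat.odd_iff.mp hq.pow]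
  norm_num

theorem two_le_of_card_eq_sq (hK : Fintype.card K = q ^ 2) : 2 ≤ q := by
  have : 1 < q ^ 2 := hK ▸ Fintype.one_lt_card
  by_contra! h
  interval_cases q <;> simp at this

theorem isSquare_of_pow_eq_self (hK : Fintype.card K = q ^ 2) (hq : Odd q) {a : K} (ha : a ≠ 0)
    (hfix : a ^ q = a) : IsSquare a := by
  have hcard : Fintype.card K % 2 = 1 := by rw [hK]; exact Nat.odd_iff.mp hq.pow
  have hq2 := two_le_of_card_eq_sq hK
  obtain ⟨k, hk⟩ : q - 1 ∣ Fintype.card K / 2 := by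
    have := two_mul_sub_one_dvd_sq_sub_one hq
    rw [← hK, ← Nat.two_mul_odd_div_two hcard] at this
    exact Nat.dvd_of_mul_dvd_mul_left two_pos this
  rw [FiniteField.isSquare_iff (ringChar_ne_two_of_card_eq_sq hK hq) ha, hk, pow_mul,
    (pow_eq_self_and_ne_zero_iff hq2).mp ⟨hfix, ha⟩, one_pow]

theorem natCard_isAdmissibleCenter (hK : Fintype.card K = q ^ 2) (hq : Odd q)
    {σ : K →+* K} (hσq : ∀ x, σ x = x ^ q) {γ₁ γ₂ d : K} (hγd : γ₁ * γ₂ = d * d) (hd0 : d ≠ 0) :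
    Nat.card {c : K | IsAdmissibleCenter σ γ₁ γ₂ c} = 2 * (q - 1) := by
  have e : {c : K | IsAdmissibleCenter σ γ₁ γ₂ c} ≃ {s : K | s ^ (2 * (q - 1)) = 1} :=
    (Equiv.mulLeft₀ (σ d) ((map_ne_zero σ).mpr hd0)).subtypeEquiv fun c => by
      simp only [Set.mem_ofPred_eq, IsAdmissibleCenter, Equiv.mulLeft₀_apply]
      rw [sq_mul_map_mul_map_of_mul_eq hγd, hσq,
        pow_eq_self_and_ne_zero_iff (two_le_of_card_eq_sq hK), ← pow_mul]
  rw [Nat.card_congr e,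
    natCard_pow_eq_one_of_dvd_card_sub_one (hK ▸ two_mul_sub_one_dvd_sq_sub_one hq)]

end FiniteField

theorem stmt_8_general (p m q : ℕ) (hp : p.Prime) (hp2 : p ≠ 2)
    (hq : q = p ^ m)
    (K : Type) [Field K] [Fintype K] (hK : Fintype.card K = q ^ 2)
    (γ₁ γ₂ : K)
    (hd : γ₁ * γ₂ ^ q - γ₁ ^ q * γ₂ ≠ 0) :
    ((∃ c r : K, c ≠ 0 ∧ r ^ q = r ∧ r ≠ 0 ∧
        (c * γ₁ ^ q + c ^ q * γ₁) ^ 2 = 4 * (γ₁ * γ₁ ^ q) * r ∧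
        (c * γ₂ ^ q + c ^ q * γ₂) ^ 2 = 4 * (γ₂ * γ₂ ^ q) * r)
      ↔ IsSquare (γ₁ * γ₂)) ∧
    (IsSquare (γ₁ * γ₂) →
      (∀ c : K,
        (∃ r : K, r ^ q = r ∧ r ≠ 0 ∧
          (c * γ₁ ^ q + c ^ q * γ₁) ^ 2 = 4 * (γ₁ * γ₁ ^ q) * r ∧
          (c * γ₂ ^ q + c ^ q * γ₂) ^ 2 = 4 * (γ₂ * γ₂ ^ q) * r)
        ↔ ((c ^ 2 * (γ₁ ^ q * γ₂ ^ q)) ^ q = c ^ 2 * (γ₁ ^ q * γ₂ ^ q) ∧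
            c ^ 2 * (γ₁ ^ q * γ₂ ^ q) ≠ 0)) ∧
      Nat.card {x : K × K | x.1 ≠ 0 ∧ x.2 ^ q = x.2 ∧ x.2 ≠ 0 ∧
        (x.1 * γ₁ ^ q + x.1 ^ q * γ₁) ^ 2 = 4 * (γ₁ * γ₁ ^ q) * x.2 ∧
        (x.1 * γ₂ ^ q + x.1 ^ q * γ₂) ^ 2 = 4 * (γ₂ * γ₂ ^ q) * x.2} =
          2 * (q - 1)) := by
  have hq_odd : Odd q := hq ▸ (hp.odd_of_ne_two hp2).pow
  have h2 : (2 : K) ≠ 0 := Ring.two_ne_zero (ringChar_ne_two_of_card_eq_sq hK hq_odd)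
  obtain ⟨σ, hσ, hσq⟩ := exists_involutive_ringHom_eq_pow hp (hq ▸ hK)
  rw [← hq] at hσq
  simp only [← hσq] at hd ⊢
  have hsq (a : K) (ha : a ≠ 0) (hfix : σ a = a) : IsSquare a :=
    isSquare_of_pow_eq_self hK hq_odd ha (hσq a ▸ hfix)
  refine ⟨exists_ne_zero_isCommonTangent_iff hσ h2 hd hsq, fun ⟨d, hγd⟩ =>
    ⟨fun c => exists_isCommonTangent_iff hσ h2 hd, ?_⟩⟩
  exact (natCard_commonTangents hσ h2 hd).trans
    (natCard_isAdmissibleCenter hK hq_odd hσq hγd (ne_zero_of_mul_eq_mul_self hd hγd))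

/-- Common tangent circles of the two lines γ̄₁z + γ₁z̄ = 0 and γ̄₂z + γ₂z̄ = 0:
a pair (c,r) with c ≠ 0, r ∈ GF(q)\{0} satisfying both tangency conditions
exists iff γ₁γ₂ is a square in GF(q²); in that case the admissible c are
exactly those with c²γ̄₁γ̄₂ ∈ GF(q)\{0}, and there are exactly 2(q−1) pairs. -/
theorem stmt_8 (p m q : ℕ) (hp : p.Prime) (hp2 : p ≠ 2) (hm : m ≠ 0)
    (hq : q = p ^ m)
    (K : Type) [Field K] [Fintype K] (hK : Fintype.card K = q ^ 2)
    (γ₁ γ₂ : K) (h1 : γ₁ ≠ 0) (h2 : γ₂ ≠ 0)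
    (hd : γ₁ * γ₂ ^ q - γ₁ ^ q * γ₂ ≠ 0) :
    ((∃ c r : K, c ≠ 0 ∧ r ^ q = r ∧ r ≠ 0 ∧
        (c * γ₁ ^ q + c ^ q * γ₁) ^ 2 = 4 * (γ₁ * γ₁ ^ q) * r ∧
        (c * γ₂ ^ q + c ^ q * γ₂) ^ 2 = 4 * (γ₂ * γ₂ ^ q) * r)
      ↔ IsSquare (γ₁ * γ₂)) ∧
    (IsSquare (γ₁ * γ₂) →
      (∀ c : K,
        (∃ r : K, r ^ q = r ∧ r ≠ 0 ∧
          (c * γ₁ ^ q + c ^ q * γ₁) ^ 2 = 4 * (γ₁ * γ₁ ^ q) * r ∧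
          (c * γ₂ ^ q + c ^ q * γ₂) ^ 2 = 4 * (γ₂ * γ₂ ^ q) * r)
        ↔ ((c ^ 2 * (γ₁ ^ q * γ₂ ^ q)) ^ q = c ^ 2 * (γ₁ ^ q * γ₂ ^ q) ∧
            c ^ 2 * (γ₁ ^ q * γ₂ ^ q) ≠ 0)) ∧
      Nat.card {x : K × K | x.1 ≠ 0 ∧ x.2 ^ q = x.2 ∧ x.2 ≠ 0 ∧
        (x.1 * γ₁ ^ q + x.1 ^ q * γ₁) ^ 2 = 4 * (γ₁ * γ₁ ^ q) * x.2 ∧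
        (x.1 * γ₂ ^ q + x.1 ^ q * γ₂) ^ 2 = 4 * (γ₂ * γ₂ ^ q) * x.2} =
          2 * (q - 1)) :=
  stmt_8_general p m q hp hp2 hq K hK γ₁ γ₂ hd
end

section
/- Let q be an odd prime power, γ ∈ GF(q²) with γ² ≠ γ̄² (where γ̄ = γ^q), and c ∈ GF(q²), r ∈ GF(q). The pair (c,r) satisfies both tangency conditions (cγ̄ + c̄γ)² = 4γγ̄r and (cγ + c̄γ̄)² = 4γγ̄r with c ≠ 0 if and only if either c̄ = c and r = c²(γ+γ̄)²/(4γγ̄), or c̄ = −c and r = c²(γ−γ̄)²/(4γγ̄). -/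
/-!
The difference of the two tangency conditions factors as `(c̄² - c²)(γ² - γ̄²)`, so they hold
together exactly when `c̄ = ±c` and one of them holds; with `c̄ = ±c` the condition reads
`(c(γ ± γ̄))² = 4γγ̄r`, which can be solved for `r` because `q` is odd, so `char K ≠ 2`.
-/

theorem FiniteField.two_ne_zero_of_odd_card {K : Type*} [Field K] [Fintype K]
    (h : Odd (Fintype.card K)) : (2 : K) ≠ 0 :=
  Ring.two_ne_zero <| by
    rwa [Ne, FiniteField.even_card_iff_char_two, ← Nat.even_iff, Nat.not_even_iff_odd]

theorem sq_add_mul_sub_sq_add_mul {K : Type*} [CommRing K] (c c' g g' : K) :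
    (c * g' + c' * g) ^ 2 - (c * g + c' * g') ^ 2 = (c' ^ 2 - c ^ 2) * (g ^ 2 - g' ^ 2) := by
  ring

theorem tangency_iff {K : Type*} [Field K] (h2 : (2 : K) ≠ 0) {g g' : K} (hg : g ≠ 0)
    (hg' : g' ≠ 0) (hgg : g ^ 2 ≠ g' ^ 2) (c c' r : K) :
    ((c * g' + c' * g) ^ 2 = 4 * (g * g') * r ∧ (c * g + c' * g') ^ 2 = 4 * (g * g') * r) ↔
      ((c' = c ∧ r = c ^ 2 * (g + g') ^ 2 / (4 * (g * g'))) ∨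
        (c' = -c ∧ r = c ^ 2 * (g - g') ^ 2 / (4 * (g * g')))) := by
  have h4 : (4 : K) ≠ 0 := by simpa [show (4 : K) = 2 * 2 by norm_num] using h2
  have hD : 4 * (g * g') ≠ 0 := mul_ne_zero h4 (mul_ne_zero hg hg')
  constructor
  · rintro ⟨h₁, h₂⟩
    have hsq : c' ^ 2 = c ^ 2 := by
      have := sq_add_mul_sub_sq_add_mul c c' g g'
      rw [h₁, h₂, sub_self, eq_comm, mul_eq_zero, sub_eq_zero, sub_eq_zero] at this
      exact this.resolve_right hgg
    rcases sq_eq_sq_iff_eq_or_eq_neg.mp hsq with rfl | rfl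
    · exact Or.inl ⟨rfl, (eq_div_iff hD).mpr (by linear_combination -h₂)⟩
    · exact Or.inr ⟨rfl, (eq_div_iff hD).mpr (by linear_combination -h₂)⟩
  · rintro (⟨rfl, rfl⟩ | ⟨rfl, rfl⟩) <;> constructor <;> field_simp <;> ring

theorem stmt_9_general (p m q : ℕ) (hp : p.Prime) (hp2 : p ≠ 2)
    (hq : q = p ^ m)
    (K : Type) [Field K] [Fintype K] (hK : Fintype.card K = q ^ 2)
    (γ : K) (hγ2 : γ ^ 2 ≠ (γ ^ q) ^ 2)
    (c r : K) :
    ((c * γ ^ q + c ^ q * γ) ^ 2 = 4 * (γ * γ ^ q) * r ∧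
     (c * γ + c ^ q * γ ^ q) ^ 2 = 4 * (γ * γ ^ q) * r ∧ c ≠ 0) ↔
    ((c ^ q = c ∧ r = c ^ 2 * (γ + γ ^ q) ^ 2 / (4 * (γ * γ ^ q)) ∧ c ≠ 0) ∨
     (c ^ q = -c ∧ r = c ^ 2 * (γ - γ ^ q) ^ 2 / (4 * (γ * γ ^ q)) ∧ c ≠ 0)) := by
  have hq_odd : Odd q := hq ▸ (hp.odd_of_ne_two hp2).pow
  have h2 : (2 : K) ≠ 0 := FiniteField.two_ne_zero_of_odd_card (hK ▸ hq_odd.pow)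
  have hγ : γ ≠ 0 := by
    rintro rfl
    simp [zero_pow hq_odd.pos.ne'] at hγ2
  rw [← and_assoc, tangency_iff h2 hγ (pow_ne_zero _ hγ) hγ2, or_and_right, and_assoc,
    and_assoc]

/-- Tangency of B¹(c,r) with the two symmetric lines γ̄z + γz̄ = 0 and
γz + γ̄z̄ = 0 (for γ² ≠ γ̄²) holds with c ≠ 0 iff either c̄ = c and
r = c²(γ+γ̄)²/(4γγ̄), or c̄ = −c and r = c²(γ−γ̄)²/(4γγ̄). -/
theorem stmt_9 (p m q : ℕ) (hp : p.Prime) (hp2 : p ≠ 2) (hm : m ≠ 0)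
    (hq : q = p ^ m)
    (K : Type) [Field K] [Fintype K] (hK : Fintype.card K = q ^ 2)
    (γ : K) (hγ2 : γ ^ 2 ≠ (γ ^ q) ^ 2)
    (c r : K) (hr : r ^ q = r) :
    ((c * γ ^ q + c ^ q * γ) ^ 2 = 4 * (γ * γ ^ q) * r ∧
     (c * γ + c ^ q * γ ^ q) ^ 2 = 4 * (γ * γ ^ q) * r ∧ c ≠ 0) ↔
    ((c ^ q = c ∧ r = c ^ 2 * (γ + γ ^ q) ^ 2 / (4 * (γ * γ ^ q)) ∧ c ≠ 0) ∨
     (c ^ q = -c ∧ r = c ^ 2 * (γ - γ ^ q) ^ 2 / (4 * (γ * γ ^ q)) ∧ c ≠ 0)) :=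
  stmt_9_general p m q hp hp2 hq K hK γ hγ2 c r
end

section
/- Let q be an odd prime power and γ ∈ GF(q²)\{0} with γ² ≠ γ̄², γγ̄ a square in GF(q) with square root s, and u = (2s + (γ+γ̄))/(2s − (γ+γ̄)). If −1 is a square in GF(q), then u is a nonsquare in GF(q), and hence the multiplicative order of u divides q−1 but does not divide (q−1)/2. If −1 is a nonsquare in GF(q), then u is a square in GF(q), its multiplicative order divides (q−1)/2, and this order is odd. -/
/-!
Write `γ̄ = γ ^ q` and `T = γ + γ̄`. From `s ^ 2 = γ γ̄` we get `(2s + T)(2s - T) = -(γ - γ̄) ^ 2`,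
so `u = -t ^ 2` with `t = (2s + T) / (γ - γ̄)`. The Frobenius `x ↦ x ^ q` fixes `s` and swaps `γ`
and `γ̄`, hence `t ^ q = -t`, i.e. `t ^ (q - 1) = -1`, and so
`u ^ ((q - 1) / 2) = -(-1) ^ ((q - 1) / 2)`. Euler's criterion for `GF(q) = {y | y ^ q = y}`, which
comes from the cyclicity of `Kˣ`, settles both cases: if `-1` is a square then
`u ^ ((q - 1) / 2) = -1`; otherwise `(q - 1) / 2` is odd and `u ^ ((q - 1) / 2) = 1`.
-/

theorem IsCyclic.exists_pow_eq_one_and_sq_eq_iff {G : Type*} [Group G] [Finite G] [IsCyclic G]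
    {a : ℕ} (ha : 2 * a ∣ Nat.card G) {x : G} :
    (∃ y : G, y ^ (2 * a) = 1 ∧ y ^ 2 = x) ↔ x ^ a = 1 := by
  constructor
  · rintro ⟨y, hy, rfl⟩
    rwa [← pow_mul]
  · intro hx
    obtain ⟨g, hg⟩ := IsCyclic.exists_generator (α := G)
    obtain ⟨k, rfl⟩ : x ∈ Submonoid.powers g := mem_powers_iff_mem_zpowers.mpr (hg x)
    obtain ⟨e, he⟩ := ha
    have hg_ord : orderOf g = 2 * a * e := (orderOf_eq_card_of_forall_mem_zpowers hg).trans he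
    have ha0 : 0 < a := Nat.pos_of_ne_zero fun h => Nat.card_pos.ne' (by simpa [h] using he)
    -- `g ^ (k * a) = 1` forces `2 * a * e ∣ k * a`, i.e. `k = 2 * e * i`
    obtain ⟨i, rfl⟩ : 2 * e ∣ k := by
      refine Nat.dvd_of_mul_dvd_mul_right ha0 ?_
      rw [mul_right_comm, ← hg_ord]
      exact orderOf_dvd_of_pow_eq_one (by rwa [← pow_mul] at hx)
    refine ⟨g ^ (e * i), ?_, by rw [← pow_mul]; ring_nf⟩
    rw [← pow_mul, show e * i * (2 * a) = 2 * a * e * i by ring, pow_mul, ← hg_ord,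
      pow_orderOf_eq_one, one_pow]

theorem FiniteField.exists_pow_eq_self_and_sq_eq_iff {K : Type*} [Field K] [Fintype K] {q : ℕ}
    (hq : q - 1 ∣ Fintype.card K - 1) (hq_odd : Odd q) {x : K} (hx : x ≠ 0) :
    (∃ y : K, y ^ q = y ∧ y ^ 2 = x) ↔ x ^ ((q - 1) / 2) = 1 := by
  classical
  obtain ⟨a, rfl⟩ := hq_odd
  have h2a : 2 * a + 1 - 1 = 2 * a := by omega
  have ha : (2 * a + 1 - 1) / 2 = a := by omega
  rw [ha]
  rw [h2a, ← Fintype.card_units, ← Nat.card_eq_fintype_card] at hq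
  have key := IsCyclic.exists_pow_eq_one_and_sq_eq_iff hq (x := Units.mk0 x hx)
  simp only [Units.ext_iff, Units.val_pow_eq_pow_val, Units.val_mk0, Units.val_one] at key
  rw [← key]
  constructor
  · rintro ⟨y, hyq, rfl⟩
    have hy : y ≠ 0 := by rintro rfl; simp at hx
    refine ⟨Units.mk0 y hy, ?_, rfl⟩
    simpa [pow_succ, hy] using hyq
  · rintro ⟨y, hyq, rfl⟩
    exact ⟨y, by rw [pow_succ, hyq, one_mul], rfl⟩

theorem neg_sq_pow_div_two_of_pow_eq_neg {R : Type*} [CommRing R] [IsDomain R] {q : ℕ} (hq : Odd q)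
    {t : R} (ht : t ≠ 0) (htq : t ^ q = -t) : (-t ^ 2) ^ ((q - 1) / 2) = -(-1) ^ ((q - 1) / 2) := by
  obtain ⟨a, rfl⟩ := hq
  have ht2a : t ^ (2 * a) = -1 := by
    rw [pow_succ, ← neg_one_mul t] at htq
    exact mul_right_cancel₀ ht htq
  rw [show (2 * a + 1 - 1) / 2 = a by omega, neg_pow, ← pow_mul, ht2a]
  ring

section Conjugates

variable {K : Type*} [Field K] {s γ δ : K}

theorem two_mul_add_ne_zero_and_two_mul_sub_ne_zero (hs : s ^ 2 = γ * δ) (hγδ : γ ≠ δ) :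
    2 * s + (γ + δ) ≠ 0 ∧ 2 * s - (γ + δ) ≠ 0 := by
  have hprod : (2 * s + (γ + δ)) * (2 * s - (γ + δ)) = -(γ - δ) ^ 2 := by
    linear_combination 4 * hs
  refine mul_ne_zero_iff.mp ?_
  rw [hprod]
  exact neg_ne_zero.2 (pow_ne_zero 2 (sub_ne_zero.2 hγδ))

theorem div_eq_neg_sq (hs : s ^ 2 = γ * δ) (hγδ : γ ≠ δ) :
    (2 * s + (γ + δ)) / (2 * s - (γ + δ)) = -((2 * s + (γ + δ)) / (γ - δ)) ^ 2 := by
  have hsub := two_mul_add_ne_zero_and_two_mul_sub_ne_zero hs hγδ |>.2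
  rw [div_pow, neg_div', div_eq_div_iff hsub (pow_ne_zero 2 (sub_ne_zero.2 hγδ))]
  linear_combination (4 * (2 * s + (γ + δ))) * hs

theorem map_div_sub_eq_neg (σ : K →+* K) (hs : σ s = s) (hγ : σ γ = δ) (hδ : σ δ = γ) :
    σ ((2 * s + (γ + δ)) / (γ - δ)) = -((2 * s + (γ + δ)) / (γ - δ)) := by
  rw [map_div₀, map_add, map_add, map_sub, map_mul, map_ofNat, hs, hγ, hδ, add_comm δ γ,
    ← neg_sub γ δ, div_neg]

end Conjugates

theorem FiniteField.pow_div_sub_eq_neg {K : Type*} [Field K] [Fintype K] {p m : ℕ} (hp : p.Prime)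
    (hK : Fintype.card K = (p ^ m) ^ 2) {s γ : K} (hs : s ^ p ^ m = s) :
    ((2 * s + (γ + γ ^ p ^ m)) / (γ - γ ^ p ^ m)) ^ p ^ m =
      -((2 * s + (γ + γ ^ p ^ m)) / (γ - γ ^ p ^ m)) := by
  have := Fact.mk hp
  have : CharP K p := charP_of_card_eq_prime_pow (by rw [hK, ← pow_mul])
  have hσ (x : K) : iterateFrobenius K p m x = x ^ p ^ m := iterateFrobenius_def p m x
  have hγ : (γ ^ p ^ m) ^ p ^ m = γ := by rw [← pow_mul, ← sq, ← hK, FiniteField.pow_card]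
  rw [← hσ]
  exact map_div_sub_eq_neg _ (by rw [hσ, hs]) (hσ γ) (by rw [hσ, hγ])

theorem stmt_13_general (p m q : ℕ) (hp : p.Prime) (hp2 : p ≠ 2)
    (hq : q = p ^ m)
    (K : Type) [Field K] [Fintype K] (hK : Fintype.card K = q ^ 2)
    (γ : K) (hγ2 : γ ^ 2 ≠ (γ ^ q) ^ 2)
    (s : K) (hs : s ^ q = s) (hs2 : s ^ 2 = γ * γ ^ q)
    (u : K) (hu : u = (2 * s + (γ + γ ^ q)) / (2 * s - (γ + γ ^ q))) :
    ((∃ y : K, y ^ q = y ∧ y ^ 2 = (-1 : K)) →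
      (¬ ∃ y : K, y ^ q = y ∧ y ^ 2 = u) ∧
      orderOf u ∣ q - 1 ∧ ¬ orderOf u ∣ (q - 1) / 2) ∧
    ((¬ ∃ y : K, y ^ q = y ∧ y ^ 2 = (-1 : K)) →
      (∃ y : K, y ^ q = y ∧ y ^ 2 = u) ∧
      orderOf u ∣ (q - 1) / 2 ∧ Odd (orderOf u)) := by
  have hq_odd : Odd q := hq ▸ (hp.odd_of_ne_two hp2).pow
  have hneg : (-1 : K) ≠ 1 := Ring.neg_one_ne_one_of_char_ne_two fun h =>
    Nat.not_even_iff_odd.2 (hK ▸ hq_odd.pow)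
      (Nat.even_iff.2 (FiniteField.even_card_iff_char_two.1 h))
  have hγ : γ ≠ γ ^ q := fun h => hγ2 (by rw [← h])
  set t := (2 * s + (γ + γ ^ q)) / (γ - γ ^ q)
  have ht : t ≠ 0 := div_ne_zero (two_mul_add_ne_zero_and_two_mul_sub_ne_zero hs2 hγ).1
    (sub_ne_zero.2 hγ)
  have htq : t ^ q = -t := by subst hq; exact FiniteField.pow_div_sub_eq_neg hp hK hs
  rw [div_eq_neg_sq hs2 hγ] at hu
  have hu0 : u ≠ 0 := hu ▸ neg_ne_zero.2 (pow_ne_zero 2 ht)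
  have hu_pow : u ^ ((q - 1) / 2) = -(-1) ^ ((q - 1) / 2) :=
    hu ▸ neg_sq_pow_div_two_of_pow_eq_neg hq_odd ht htq
  have hcard : q - 1 ∣ Fintype.card K - 1 := hK ▸ Nat.sub_one_dvd_pow_sub_one q 2
  rw [FiniteField.exists_pow_eq_self_and_sq_eq_iff hcard hq_odd (neg_ne_zero.2 one_ne_zero),
    FiniteField.exists_pow_eq_self_and_sq_eq_iff hcard hq_odd hu0]
  constructor
  · intro h
    rw [h] at hu_pow
    refine ⟨hu_pow ▸ hneg, orderOf_dvd_of_pow_eq_one ?_,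
      fun hd => hneg (hu_pow ▸ orderOf_dvd_iff_pow_eq_one.mp hd)⟩
    rw [← Nat.two_mul_div_two_of_even (hq_odd.tsub_odd odd_one), pow_mul', hu_pow, neg_one_sq]
  · intro h
    have ha : Odd ((q - 1) / 2) := Nat.not_even_iff_odd.mp fun he => h he.neg_one_pow
    rw [ha.neg_one_pow, neg_neg] at hu_pow
    exact ⟨hu_pow, orderOf_dvd_of_pow_eq_one hu_pow,
      ha.of_dvd_nat (orderOf_dvd_of_pow_eq_one hu_pow)⟩

/-- For u = (2s + (γ+γ̄))/(2s − (γ+γ̄)) with s² = γγ̄, s ∈ GF(q):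
if −1 is a square in GF(q) then u is a nonsquare in GF(q) and ord(u) ∣ q−1
but ord(u) ∤ (q−1)/2; if −1 is a nonsquare in GF(q) then u is a square in
GF(q), ord(u) ∣ (q−1)/2 and ord(u) is odd. -/
theorem stmt_13 (p m q : ℕ) (hp : p.Prime) (hp2 : p ≠ 2) (hm : m ≠ 0)
    (hq : q = p ^ m)
    (K : Type) [Field K] [Fintype K] (hK : Fintype.card K = q ^ 2)
    (γ : K) (hγ : γ ≠ 0) (hγ2 : γ ^ 2 ≠ (γ ^ q) ^ 2)
    (s : K) (hs : s ^ q = s) (hs2 : s ^ 2 = γ * γ ^ q)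
    (u : K) (hu : u = (2 * s + (γ + γ ^ q)) / (2 * s - (γ + γ ^ q))) :
    ((∃ y : K, y ^ q = y ∧ y ^ 2 = (-1 : K)) →
      (¬ ∃ y : K, y ^ q = y ∧ y ^ 2 = u) ∧
      orderOf u ∣ q - 1 ∧ ¬ orderOf u ∣ (q - 1) / 2) ∧
    ((¬ ∃ y : K, y ^ q = y ∧ y ^ 2 = (-1 : K)) →
      (∃ y : K, y ^ q = y ∧ y ^ 2 = u) ∧
      orderOf u ∣ (q - 1) / 2 ∧ Odd (orderOf u)) :=
  stmt_13_general p m q hp hp2 hq K hK γ hγ2 s hs hs2 u hu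
end

section
/- Let q be an odd prime power and g ∈ GF(q²)\{0} with g ≠ ±ḡ (where ḡ = g^q). Define κ = (g+ḡ)²/(g·ḡ) ∈ GF(q). Then g is a square in GF(q²) if and only if either (κ = 0 and −1 is a nonsquare in GF(q)) or (κ ≠ 0 and κ is a square in GF(q)). -/
/-!
Write `x̄ = x ^ q`; the fixed points of `x ↦ x̄` form the subfield `GF(q)`. Since `g ≠ -ḡ`, the
trace `T = g + ḡ` is a nonzero element of `GF(q)`, so `T ^ (q - 1) = 1` and `κ = T² / N`, with
`N = g ḡ ∈ GF(q)`, is nonzero and satisfies `κ ^ ((q - 1) / 2) = (N ^ ((q - 1) / 2))⁻¹`.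
By Euler's criterion in `GF(q²)`, `g` is a square iff `g ^ ((q² - 1) / 2) = N ^ ((q - 1) / 2)`
is `1`, i.e. iff `κ ^ ((q - 1) / 2) = 1`, which by Euler's criterion in `GF(q)` says that `κ` is
a square in `GF(q)`.
-/

theorem Nat.sq_div_two_of_odd {q : ℕ} (hq : Odd q) : q ^ 2 / 2 = (q + 1) * (q / 2) := by
  obtain ⟨k, rfl⟩ := hq
  rw [show (2 * k + 1) ^ 2 = 2 * ((2 * k + 1 + 1) * k) + 1 by ring,
    show (2 * k + 1) / 2 = k by omega]
  omega

theorem sq_pow_half_eq_one_of_pow_eq_self {M : Type*} [MonoidWithZero M] [IsRightCancelMulZero M] {q : ℕ}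
    (hq : Odd q) {y : M} (hy : y ≠ 0) (hyq : y ^ q = y) : (y ^ 2) ^ (q / 2) = 1 := by
  obtain ⟨k, rfl⟩ := hq
  rw [show (2 * k + 1) / 2 = k by omega, ← pow_mul]
  exact mul_right_cancel₀ hy (by rw [← pow_succ, hyq, one_mul])

namespace FiniteField

variable {K : Type*} [Field K] [Fintype K] {q : ℕ}

theorem ringChar_ne_two_of_card_eq_sq (hK : Fintype.card K = q ^ 2) (hq : Odd q) :
    ringChar K ≠ 2 := by
  rw [Ne, even_card_iff_char_two, hK, ← Nat.even_iff, Nat.not_even_iff_odd]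
  exact hq.pow

theorem isSquare_iff_pow_succ_pow_half_eq_one (hK : Fintype.card K = q ^ 2) (hq : Odd q)
    {x : K} (hx : x ≠ 0) : IsSquare x ↔ (x ^ (q + 1)) ^ (q / 2) = 1 := by
  rw [isSquare_iff (ringChar_ne_two_of_card_eq_sq hK hq) hx, hK, Nat.sq_div_two_of_odd hq,
    pow_mul]

theorem exists_pow_eq_self_sq_eq_iff (hK : Fintype.card K = q ^ 2) (hq : Odd q)
    {x : K} (hx : x ≠ 0) (hxq : x ^ q = x) :
    (∃ y : K, y ^ q = y ∧ y ^ 2 = x) ↔ x ^ (q / 2) = 1 := by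
  constructor
  · rintro ⟨y, hyq, rfl⟩
    exact sq_pow_half_eq_one_of_pow_eq_self hq (by rintro rfl; simp at hx) hyq
  · intro hx1
    have hsq : IsSquare x := by
      rw [isSquare_iff_pow_succ_pow_half_eq_one hK hq hx, pow_succ, hxq, ← sq, pow_right_comm,
        hx1, one_pow]
    obtain ⟨w, rfl⟩ := hsq
    refine ⟨w, ?_, sq w⟩
    obtain ⟨k, rfl⟩ := hq
    rw [show (2 * k + 1) / 2 = k by omega, ← sq, ← pow_mul] at hx1
    rw [pow_succ, hx1, one_mul]

theorem pow_pow_eq_self_of_card_eq_sq (hK : Fintype.card K = q ^ 2) (x : K) :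
    (x ^ q) ^ q = x := by
  rw [← pow_mul, ← sq, ← hK, pow_card]

theorem mul_pow_self_pow_eq (hK : Fintype.card K = q ^ 2) (x : K) :
    (x * x ^ q) ^ q = x * x ^ q := by
  rw [mul_pow, pow_pow_eq_self_of_card_eq_sq hK, mul_comm]

theorem add_pow_self_pow_eq {p m : ℕ} [Fact p.Prime] [CharP K p] (hK : Fintype.card K = q ^ 2)
    (hq : q = p ^ m) (x : K) : (x + x ^ q) ^ q = x + x ^ q := by
  rw [hq, add_pow_char_pow, ← hq, pow_pow_eq_self_of_card_eq_sq hK, add_comm]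

end FiniteField

open FiniteField in
theorem stmt_15_general (p m q : ℕ) (hp : p.Prime) (hp2 : p ≠ 2)
    (hq : q = p ^ m)
    (K : Type) [Field K] [Fintype K] (hK : Fintype.card K = q ^ 2)
    (g : K) (hg : g ≠ 0) (hg2 : g ≠ -(g ^ q))
    (κ : K) (hκ : κ = (g + g ^ q) ^ 2 / (g * g ^ q)) :
    IsSquare g ↔
      (κ = 0 ∧ ¬ ∃ y : K, y ^ q = y ∧ y ^ 2 = (-1 : K)) ∨
      (κ ≠ 0 ∧ ∃ y : K, y ^ q = y ∧ y ^ 2 = κ) := by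
  have : Fact p.Prime := ⟨hp⟩
  have : CharP K p := charP_of_card_eq_prime_pow (f := m * 2) (by rw [hK, hq, pow_mul])
  have hodd : Odd q := hq ▸ (hp.odd_of_ne_two hp2).pow
  have hT : g + g ^ q ≠ 0 := fun h ↦ hg2 (eq_neg_of_add_eq_zero_left h)
  have hN : g * g ^ q ≠ 0 := mul_ne_zero hg (pow_ne_zero q hg)
  have hκ0 : κ ≠ 0 := hκ ▸ div_ne_zero (pow_ne_zero 2 hT) hN
  have hκq : κ ^ q = κ := by
    rw [hκ, div_pow, pow_right_comm, add_pow_self_pow_eq hK hq, mul_pow_self_pow_eq hK]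
  rw [isSquare_iff_pow_succ_pow_half_eq_one hK hodd hg, pow_succ',
    or_iff_right fun h ↦ hκ0 h.1, and_iff_right hκ0,
    exists_pow_eq_self_sq_eq_iff hK hodd hκ0 hκq, hκ, div_pow,
    sq_pow_half_eq_one_of_pow_eq_self hodd hT (add_pow_self_pow_eq hK hq g), one_div, inv_eq_one]

/-- For g ∈ GF(q²)\{0} with g ≠ ±ḡ and κ = (g+ḡ)²/(gḡ): g is a square in
GF(q²) iff (κ = 0 and −1 is a nonsquare in GF(q)) or (κ ≠ 0 and κ is a
square in GF(q)). -/
theorem stmt_15 (p m q : ℕ) (hp : p.Prime) (hp2 : p ≠ 2) (hm : m ≠ 0)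
    (hq : q = p ^ m)
    (K : Type) [Field K] [Fintype K] (hK : Fintype.card K = q ^ 2)
    (g : K) (hg : g ≠ 0) (hg1 : g ≠ g ^ q) (hg2 : g ≠ -(g ^ q))
    (κ : K) (hκ : κ = (g + g ^ q) ^ 2 / (g * g ^ q)) :
    IsSquare g ↔
      (κ = 0 ∧ ¬ ∃ y : K, y ^ q = y ∧ y ^ 2 = (-1 : K)) ∨
      (κ ≠ 0 ∧ ∃ y : K, y ^ q = y ∧ y ^ 2 = κ) :=
  stmt_15_general p m q hp hp2 hq K hK g hg hg2 κ hκ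
end
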